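/- Let F : Ω → U be a continuous frame with bounds A₀, B and frame operator S defined weakly by ⟨Sf, f⟩ = ∫_Ω ⟨f,F(ω)⟩⟨F(ω),f⟩ dμ(ω). Then S is a positive, self-adjoint, invertible adjointable operator on U satisfying A₀·I ≤ S ≤ B·I, and ‖S‖ ≤ B. -/

import Mathlib

/-! Polarization makes every `⟪g, F ω⟫ * ⟪F ω, f⟫` integrable, so the weak definition forces `S`
to be `ℂ`-linear, and taking `star` under the integral makes it symmetric; the frame inequalities
say exactly `A₀ ≤ S ≤ B`. From `0 ≤ S ≤ B` and `⟪(B - S) f, S (B - S) f⟫ ≥ 0` one gets `S² ≤ B S`,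
hence `‖S‖ ≤ B` and `⟪(1 - S/B) f, (1 - S/B) f⟫ ≤ (1 - A₀/B) ⟪f, f⟫`. Thus `‖1 - S/B‖ < 1`,
and `S` is invertible by the Neumann series. -/

open MeasureTheory CStarModule
open scoped RightActions

/-- The Hilbert C*-module class as Mathlib stated it in December 2024: a *right* module,
the action given by `SMul Aᵐᵒᵖ E`, with `A` an `outParam`. -/
class CStarModuleOld (A : outParam <| Type*) (E : Type*) [NonUnitalSemiring A] [StarRing A]
    [Module ℂ A] [AddCommGroup E] [Module ℂ E] [PartialOrder A] [SMul Aᵐᵒᵖ E] [Norm A] [Norm E]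
    extends Inner A E where
  inner_add_right {x} {y} {z} : inner x (y + z) = inner x y + inner x z
  inner_self_nonneg {x} : 0 ≤ inner x x
  inner_self {x} : inner x x = 0 ↔ x = 0
  inner_op_smul_right {a : A} {x y : E} : inner x (y <• a) = inner x y * a
  inner_smul_right_complex {z : ℂ} {x} {y} : inner x (z • y) = z • inner x y
  star_inner x y : star (inner x y) = inner y x
  norm_eq_sqrt_norm_inner_self x : ‖x‖ = Real.sqrt ‖inner x x‖

variable {A : Type*} [CStarAlgebra A] [PartialOrder A] [StarOrderedRing A]
variable {U : Type*} [NormedAddCommGroup U] [NormedSpace ℂ U] [CompleteSpace U]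
  [SMul Aᵐᵒᵖ U] [CStarModuleOld A U]
variable {Ω : Type*} [MeasurableSpace Ω]

local notation "⟪" x ", " y "⟫" => (inner A x y : A)

/-- `F : Ω → U` is a continuous frame for the Hilbert C*-module `U` with bounds `A₀`, `B`. -/
def IsContinuousFrame (μ : Measure Ω) (F : Ω → U) (A₀ B : ℝ) : Prop :=
  0 < A₀ ∧ 0 < B ∧
  (∀ f : U, StronglyMeasurable fun ω => (inner A f (F ω) : A)) ∧
  (∀ f : U, Integrable (fun ω => (inner A f (F ω) : A) * inner A (F ω) f) μ) ∧
  ∀ f : U, A₀ • (inner A f f : A) ≤ (∫ ω, (inner A f (F ω) : A) * inner A (F ω) f ∂μ) ∧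
    (∫ ω, (inner A f (F ω) : A) * inner A (F ω) f ∂μ) ≤ B • (inner A f f : A)

/-- `F : Ω → U` is a continuous Bessel mapping with bound `B`. -/
def IsBessel (μ : Measure Ω) (F : Ω → U) (B : ℝ) : Prop :=
  0 < B ∧
  (∀ f : U, StronglyMeasurable fun ω => (inner A f (F ω) : A)) ∧
  (∀ f : U, Integrable (fun ω => (inner A f (F ω) : A) * inner A (F ω) f) μ) ∧
  ∀ f : U, (∫ ω, (inner A f (F ω) : A) * inner A (F ω) f ∂μ) ≤ B • (inner A f f : A)

/-- `φ : Ω → A` belongs to the Hilbert `A`-module `L²(Ω, A)`. -/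
def MemL2 (μ : Measure Ω) (φ : Ω → A) : Prop :=
  AEStronglyMeasurable φ μ ∧ Integrable (fun ω => star (φ ω) * φ ω) μ

/-- `G` is a dual of the continuous Bessel mapping `F` (weak reconstruction formula). -/
def IsDual (μ : Measure Ω) (F G : Ω → U) : Prop :=
  (∃ B : ℝ, IsBessel μ G B) ∧
  ∀ f g : U, (inner A f g : A) = ∫ ω, (inner A f (G ω) : A) * inner A (F ω) g ∂μ

namespace CStarModuleOld

section Algebraic

omit [StarOrderedRing A] [CompleteSpace U]

lemma inner_add_left {x y z : U} : ⟪x + y, z⟫ = ⟪x, z⟫ + ⟪y, z⟫ := by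
  rw [← star_inner z (x + y), inner_add_right, star_add, star_inner, star_inner]

lemma inner_zero_right {x : U} : ⟪x, 0⟫ = 0 := by
  have h : ⟪x, 0 + 0⟫ = ⟪x, 0⟫ + ⟪x, 0⟫ := inner_add_right
  rwa [add_zero, left_eq_add] at h

lemma inner_neg_right {x y : U} : ⟪x, -y⟫ = -⟪x, y⟫ := by
  have h : ⟪x, y + -y⟫ = ⟪x, y⟫ + ⟪x, -y⟫ := inner_add_right
  rw [add_neg_cancel, inner_zero_right] at h
  exact (neg_eq_of_add_eq_zero_right h.symm).symm

lemma inner_sub_right {x y z : U} : ⟪x, y - z⟫ = ⟪x, y⟫ - ⟪x, z⟫ := by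
  rw [sub_eq_add_neg, inner_add_right, inner_neg_right, ← sub_eq_add_neg]

lemma inner_sub_left {x y z : U} : ⟪x - y, z⟫ = ⟪x, z⟫ - ⟪y, z⟫ := by
  rw [← star_inner z (x - y), inner_sub_right, star_sub, star_inner, star_inner]

lemma inner_smul_left_complex {z : ℂ} {x y : U} : ⟪z • x, y⟫ = star z • ⟪x, y⟫ := by
  rw [← star_inner y (z • x), inner_smul_right_complex, star_smul, star_inner]

lemma inner_smul_right_real {r : ℝ} {x y : U} : ⟪x, r • y⟫ = r • ⟪x, y⟫ := by
  rw [RCLike.real_smul_eq_coe_smul (K := ℂ) r y, inner_smul_right_complex,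
    RCLike.real_smul_eq_coe_smul (K := ℂ) r ⟪x, y⟫]

lemma inner_smul_left_real {r : ℝ} {x y : U} : ⟪r • x, y⟫ = r • ⟪x, y⟫ := by
  rw [← star_inner y (r • x), inner_smul_right_real, star_smul, star_inner, star_trivial]

lemma norm_sq_eq {x : U} : ‖x‖ ^ 2 = ‖⟪x, x⟫‖ := by
  rw [norm_eq_sqrt_norm_inner_self x, Real.sq_sqrt (norm_nonneg _)]

lemma ext_inner_left {x y : U} (h : ∀ g : U, ⟪g, x⟫ = ⟪g, y⟫) : x = y := by
  rw [← sub_eq_zero, ← inner_self (A := A), inner_sub_right, h, sub_self]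

lemma inner_mul_inner_eq_polarization (f g h : U) :
    ⟪g, h⟫ * ⟪h, f⟫ = (4⁻¹ : ℂ) • ((⟪f + g, h⟫ * ⟪h, f + g⟫ - ⟪f - g, h⟫ * ⟪h, f - g⟫)
      + Complex.I • (⟪f + Complex.I • g, h⟫ * ⟪h, f + Complex.I • g⟫
        - ⟪f - Complex.I • g, h⟫ * ⟪h, f - Complex.I • g⟫)) := by
  simp only [inner_add_left, inner_add_right, inner_sub_left, inner_sub_right,
    inner_smul_left_complex, inner_smul_right_complex, Complex.star_def, Complex.conj_I,
    mul_add, add_mul, mul_sub, sub_mul, smul_mul_assoc, mul_smul_comm, smul_add, smul_sub,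
    smul_smul]
  match_scalars <;> ring_nf <;> simp only [Complex.I_sq] <;> ring

end Algebraic

section BoundedOperator

omit [CompleteSpace U]

variable (S : U →ₗ[ℂ] U) {A₀ B : ℝ}

lemma norm_le_mul_norm_of_inner_self_le {x y : U} {k : ℝ} (hk : 0 ≤ k)
    (h : ⟪x, x⟫ ≤ k ^ 2 • ⟪y, y⟫) : ‖x‖ ≤ k * ‖y‖ := by
  refine le_of_sq_le_sq ?_ (by positivity)
  calc ‖x‖ ^ 2 = ‖⟪x, x⟫‖ := norm_sq_eq
    _ ≤ ‖k ^ 2 • ⟪y, y⟫‖ := CStarAlgebra.norm_le_norm_of_nonneg_of_le inner_self_nonneg h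
    _ = (k * ‖y‖) ^ 2 := by rw [norm_smul, ← norm_sq_eq, Real.norm_of_nonneg (by positivity)]; ring

lemma inner_map_map_le_smul_inner_map (hsym : ∀ f g : U, ⟪S f, g⟫ = ⟪f, S g⟫)
    (hpos : ∀ f : U, 0 ≤ ⟪f, S f⟫) (hB : 0 < B) (hup : ∀ f : U, ⟪f, S f⟫ ≤ B • ⟪f, f⟫)
    (f : U) : ⟪S f, S f⟫ ≤ B • ⟪f, S f⟫ := by
  have key : B • ⟪f, S f⟫ - ⟪S f, S f⟫
      = B⁻¹ • ((B • ⟪S f, S f⟫ - ⟪S f, S (S f)⟫) + ⟪B • f - S f, S (B • f - S f)⟫) := by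
    simp only [map_sub, LinearMap.map_smul_of_tower, inner_sub_left, inner_sub_right,
      inner_smul_left_real, inner_smul_right_real, ← hsym f (S f)]
    match_scalars <;> field_simp <;> ring
  rw [← sub_nonneg, key]
  exact smul_nonneg (inv_nonneg.mpr hB.le) (add_nonneg (sub_nonneg.mpr (hup _)) (hpos _))

lemma norm_map_le (hsym : ∀ f g : U, ⟪S f, g⟫ = ⟪f, S g⟫)
    (hpos : ∀ f : U, 0 ≤ ⟪f, S f⟫) (hB : 0 < B) (hup : ∀ f : U, ⟪f, S f⟫ ≤ B • ⟪f, f⟫)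
    (f : U) : ‖S f‖ ≤ B * ‖f‖ := by
  refine norm_le_mul_norm_of_inner_self_le hB.le ?_
  calc ⟪S f, S f⟫ ≤ B • ⟪f, S f⟫ := inner_map_map_le_smul_inner_map S hsym hpos hB hup f
    _ ≤ B • B • ⟪f, f⟫ := smul_le_smul_of_nonneg_left (hup f) hB.le
    _ = B ^ 2 • ⟪f, f⟫ := by rw [smul_smul, sq]

lemma inner_sub_inv_smul_map_le (hsym : ∀ f g : U, ⟪S f, g⟫ = ⟪f, S g⟫)
    (hpos : ∀ f : U, 0 ≤ ⟪f, S f⟫) (hlow : ∀ f : U, A₀ • ⟪f, f⟫ ≤ ⟪f, S f⟫) (hB : 0 < B)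
    (hup : ∀ f : U, ⟪f, S f⟫ ≤ B • ⟪f, f⟫) (f : U) :
    ⟪f - B⁻¹ • S f, f - B⁻¹ • S f⟫ ≤ (1 - A₀ / B) • ⟪f, f⟫ := by
  have key : (1 - A₀ / B) • ⟪f, f⟫ - ⟪f - B⁻¹ • S f, f - B⁻¹ • S f⟫
      = B⁻¹ • (⟪f, S f⟫ - A₀ • ⟪f, f⟫) + (B⁻¹ * B⁻¹) • (B • ⟪f, S f⟫ - ⟪S f, S f⟫) := by
    simp only [inner_sub_left, inner_sub_right, inner_smul_left_real, inner_smul_right_real,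
      hsym f f]
    match_scalars <;> field_simp <;> ring
  rw [← sub_nonneg, key]
  exact add_nonneg (smul_nonneg (by positivity) (sub_nonneg.mpr (hlow f)))
    (smul_nonneg (by positivity)
      (sub_nonneg.mpr (inner_map_map_le_smul_inner_map S hsym hpos hB hup f)))

end BoundedOperator

theorem bijective_of_smul_le_inner_map_le (S : U →ₗ[ℂ] U) {A₀ B : ℝ}
    (hsym : ∀ f g : U, ⟪S f, g⟫ = ⟪f, S g⟫) (hA₀ : 0 < A₀)
    (hlow : ∀ f : U, A₀ • ⟪f, f⟫ ≤ ⟪f, S f⟫) (hB : 0 < B)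
    (hup : ∀ f : U, ⟪f, S f⟫ ≤ B • ⟪f, f⟫) : Function.Bijective S := by
  have hpos : ∀ f : U, 0 ≤ ⟪f, S f⟫ :=
    fun f => (smul_nonneg hA₀.le inner_self_nonneg).trans (hlow f)
  let Sc : U →L[ℂ] U := S.mkContinuous B (norm_map_le S hsym hpos hB hup)
  set κ : ℝ := max (1 - A₀ / B) 0
  have hκ : 0 ≤ κ := le_max_right _ _
  have hnorm : ‖1 - B⁻¹ • Sc‖ < 1 := by
    refine (ContinuousLinearMap.opNorm_le_bound _ (Real.sqrt_nonneg κ) fun f => ?_).trans_lt ?_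
    · refine norm_le_mul_norm_of_inner_self_le (Real.sqrt_nonneg κ) ?_
      rw [Real.sq_sqrt hκ]
      exact (inner_sub_inv_smul_map_le S hsym hpos hlow hB hup f).trans
        (smul_le_smul_of_nonneg_right (le_max_left _ _) inner_self_nonneg)
    · rw [Real.sqrt_lt' one_pos, one_pow, max_lt_iff]
      exact ⟨by linarith [div_pos hA₀ hB], one_pos⟩
  have hunit : IsUnit Sc := by
    have := isUnit_one_sub_of_norm_lt_one hnorm
    rw [sub_sub_cancel] at this
    exact (isUnit_smul_iff (Units.mk0 B⁻¹ (inv_ne_zero hB.ne')) Sc).mp this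
  exact ContinuousLinearMap.isUnit_iff_bijective.mp hunit

end CStarModuleOld

section WeakFrameOperator

omit [StarOrderedRing A] [CompleteSpace U]

lemma integrable_inner_mul_inner {μ : Measure Ω} {F : Ω → U}
    (hint : ∀ f : U, Integrable (fun ω => ⟪f, F ω⟫ * ⟪F ω, f⟫) μ) (f g : U) :
    Integrable (fun ω => ⟪g, F ω⟫ * ⟪F ω, f⟫) μ := by
  simp_rw [CStarModuleOld.inner_mul_inner_eq_polarization f g]
  exact (((hint _).sub (hint _)).add (((hint _).sub (hint _)).smul Complex.I)).smul (4⁻¹ : ℂ)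

def IsWeakFrameOperator (μ : Measure Ω) (F : Ω → U) (S : U → U) : Prop :=
  ∀ f g : U, ⟪g, S f⟫ = ∫ ω, ⟪g, F ω⟫ * ⟪F ω, f⟫ ∂μ

namespace IsWeakFrameOperator

variable {μ : Measure Ω} {F : Ω → U} {S : U → U}

lemma map_add (hS : IsWeakFrameOperator μ F S)
    (hint : ∀ f : U, Integrable (fun ω => ⟪f, F ω⟫ * ⟪F ω, f⟫) μ) (f₁ f₂ : U) :
    S (f₁ + f₂) = S f₁ + S f₂ :=
  CStarModuleOld.ext_inner_left fun g => by
    rw [CStarModuleOld.inner_add_right, hS, hS, hS, ← integral_add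
      (integrable_inner_mul_inner hint f₁ g) (integrable_inner_mul_inner hint f₂ g)]
    simp_rw [CStarModuleOld.inner_add_right, mul_add]

lemma map_smul (hS : IsWeakFrameOperator μ F S) (z : ℂ) (f : U) : S (z • f) = z • S f :=
  CStarModuleOld.ext_inner_left fun g => by
    rw [CStarModuleOld.inner_smul_right_complex, hS, hS, ← integral_smul]
    simp_rw [CStarModuleOld.inner_smul_right_complex, mul_smul_comm]

def toLinearMap (hS : IsWeakFrameOperator μ F S)
    (hint : ∀ f : U, Integrable (fun ω => ⟪f, F ω⟫ * ⟪F ω, f⟫) μ) : U →ₗ[ℂ] U where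
  toFun := S
  map_add' := hS.map_add hint
  map_smul' := hS.map_smul

lemma inner_map_comm (hS : IsWeakFrameOperator μ F S) (f g : U) : ⟪S f, g⟫ = ⟪f, S g⟫ :=
  calc ⟪S f, g⟫ = star (∫ ω, ⟪g, F ω⟫ * ⟪F ω, f⟫ ∂μ) := by
        rw [← hS, CStarModuleOld.star_inner]
    _ = ∫ ω, star (⟪g, F ω⟫ * ⟪F ω, f⟫) ∂μ :=
        (ContinuousLinearEquiv.integral_comp_comm (starL' ℝ : A ≃L[ℝ] A) _).symm
    _ = ⟪f, S g⟫ := by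
        simp_rw [hS g f, star_mul, CStarModuleOld.star_inner]

end IsWeakFrameOperator

end WeakFrameOperator

/-- The frame operator `S` of a continuous frame with bounds `A₀, B`, defined weakly by
`⟨g, Sf⟩ = ∫ ⟨g,F(ω)⟩⟨F(ω),f⟩ dμ`, is positive, self-adjoint, invertible and satisfies
`A₀·I ≤ S ≤ B·I` and `‖S‖ ≤ B`. -/
theorem frame_operator_properties (μ : Measure Ω) (F : Ω → U) (A₀ B : ℝ)
    (hF : IsContinuousFrame μ F A₀ B) (S : U → U)
    (hS : ∀ f g : U, ⟪g, S f⟫ = ∫ ω, ⟪g, F ω⟫ * ⟪F ω, f⟫ ∂μ) :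
    (∀ f : U, 0 ≤ ⟪f, S f⟫) ∧
    (∀ f g : U, ⟪S f, g⟫ = ⟪f, S g⟫) ∧
    Function.Bijective S ∧
    (∀ f : U, A₀ • ⟪f, f⟫ ≤ ⟪f, S f⟫) ∧
    (∀ f : U, ⟪f, S f⟫ ≤ B • ⟪f, f⟫) ∧
    (∀ f : U, ‖S f‖ ≤ B * ‖f‖) := by
  obtain ⟨hA₀, hB, -, hint, hbounds⟩ := hF
  have hS' : IsWeakFrameOperator μ F S := hS
  have hlow : ∀ f : U, A₀ • ⟪f, f⟫ ≤ ⟪f, S f⟫ := fun f => hS f f ▸ (hbounds f).1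
  have hup : ∀ f : U, ⟪f, S f⟫ ≤ B • ⟪f, f⟫ := fun f => hS f f ▸ (hbounds f).2
  have hpos : ∀ f : U, 0 ≤ ⟪f, S f⟫ :=
    fun f => (smul_nonneg hA₀.le CStarModuleOld.inner_self_nonneg).trans (hlow f)
  let L := hS'.toLinearMap hint
  exact ⟨hpos, hS'.inner_map_comm,
    CStarModuleOld.bijective_of_smul_le_inner_map_le L hS'.inner_map_comm hA₀ hlow hB hup,
    hlow, hup, CStarModuleOld.norm_map_le L hS'.inner_map_comm hpos hB hup⟩
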